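/- (Multiplicativity of the Möbius function.) Let s ∈ S⁺, let u = (u_1,…,u_p) ∈ AP(s) and v ∈ AP(s) with v ≤ u. For k = 1,…,p let v^k denote the partition of the word u_k induced by those blocks of v contained in u_k. Then each v^k is an admissible partition of the word u_k and the Möbius function of AP(s) factorizes as m(v|u) = m(v^1|u_1) ⋯ m(v^p|u_p), where on the right m(v^k|u_k) denotes the Möbius function of the lattice AP(u_k) evaluated between v^k and the one-block partition of u_k. Consequently, for v < 1_s one has m(v|1_s) = −Σ_{v≤u<1_s} m(v^1|u_1)⋯m(v^p|u_p). -/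
import Mathlib


/-- The two-letter alphabet `{z, w}`. -/
inductive Letter | z | w
deriving DecidableEq

/-- Words: elements of the free monoid `S = FS({z,w})`. -/
abbrev Word := List Letter

/-- The letter of `s` at position `j` (defaulting to `z`). -/
def letterAt (s : Word) (j : ℕ) : Letter := s.getD j Letter.z

/-- `P` is a partition of the finite set of positions `g ⊆ ℕ` into nonempty blocks. -/
def IsPartitionOn (g : Finset ℕ) (P : Finset (Finset ℕ)) : Prop :=
  (∀ b ∈ P, b.Nonempty) ∧ (P : Set (Finset ℕ)).PairwiseDisjoint id ∧ P.sup id = g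

/-- The position `j` is inner with respect to the block `b`:
`j ∉ b` and `min b < j < max b`. -/
def InnerPos (j : ℕ) (b : Finset ℕ) : Prop :=
  j ∉ b ∧ ∃ i ∈ b, ∃ k ∈ b, i < j ∧ j < k

/-- A partition is admissible if no block contains a letter `w` that is inner
with respect to another block. -/
def Admissible (s : Word) (P : Finset (Finset ℕ)) : Prop :=
  ∀ b ∈ P, ∀ b' ∈ P, b ≠ b' → ∀ j ∈ b, letterAt s j = Letter.w → ¬ InnerPos j b'

open scoped Classical in
/-- The set `AP(s)` of admissible partitions of the positions `g` of the word `s`. -/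
noncomputable def APfin (s : Word) (g : Finset ℕ) : Finset (Finset (Finset ℕ)) :=
  g.powerset.powerset.filter fun P => IsPartitionOn g P ∧ Admissible s P

/-- The subword of `s` determined by a set of positions `b`. -/
def wordOf (s : Word) (b : Finset ℕ) : Word :=
  (b.sort (· ≤ ·)).map (letterAt s)

/-- `L` is the family of admissible cumulants of the moment function `M`:
`M(s) = Σ_{u ∈ AP(s)} L(u₁)⋯L(u_p)` for every nonempty word `s`. -/
def IsCumulants (M L : Word → ℂ) : Prop :=
  ∀ s : Word, s ≠ [] →
    M s = ∑ P ∈ APfin s (Finset.range s.length), ∏ b ∈ P, L (wordOf s b)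

/-- `P` refines `Q`: every block of `P` is contained in a block of `Q`. -/
def Refines (P Q : Finset (Finset ℕ)) : Prop := ∀ b ∈ P, ∃ c ∈ Q, b ⊆ c

open scoped Classical in
/-- `m` is the Möbius function of the lattice `AP(s)` of admissible partitions of
the position set `g` of `s`: `m(u|u) = 1` and `m(u|v) = −Σ_{u ≤ t < v} m(u|t)`. -/
noncomputable def IsMobius (s : Word) (g : Finset ℕ)
    (m : Finset (Finset ℕ) → Finset (Finset ℕ) → ℂ) : Prop :=
  (∀ u ∈ APfin s g, m u u = 1) ∧
    ∀ u ∈ APfin s g, ∀ v ∈ APfin s g, Refines u v → u ≠ v →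
      m u v = -∑ t ∈ (APfin s g).filter fun t => Refines u t ∧ Refines t v ∧ t ≠ v, m u t


section AuxLemmas

open Finset

open scoped Classical

variable {s : Word}

lemma mem_APfin_iff {g : Finset ℕ} {P : Finset (Finset ℕ)} :
    P ∈ APfin s g ↔ IsPartitionOn g P ∧ Admissible s P := by
  classical
  have hsub : IsPartitionOn g P → P ∈ g.powerset.powerset := by
    intro h
    rw [Finset.mem_powerset]
    intro b hb
    rw [Finset.mem_powerset]
    have : (id b : Finset ℕ) ≤ P.sup id := Finset.le_sup hb
    rw [h.2.2] at this
    exact this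
  simp only [APfin, Finset.mem_filter]
  tauto

lemma block_subset {g : Finset ℕ} {P : Finset (Finset ℕ)} (hP : IsPartitionOn g P)
    {b : Finset ℕ} (hb : b ∈ P) : b ⊆ g := by
  have : (id b : Finset ℕ) ≤ P.sup id := Finset.le_sup hb
  rw [hP.2.2] at this
  exact this

lemma exists_block {g : Finset ℕ} {P : Finset (Finset ℕ)} (hP : IsPartitionOn g P)
    {j : ℕ} (hj : j ∈ g) : ∃ b ∈ P, j ∈ b := by
  rw [← hP.2.2] at hj
  simpa using Finset.mem_sup.mp hj

lemma blocks_eq {g : Finset ℕ} {P : Finset (Finset ℕ)} (hP : IsPartitionOn g P)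
    {b c : Finset ℕ} (hb : b ∈ P) (hc : c ∈ P) {j : ℕ} (hjb : j ∈ b) (hjc : j ∈ c) :
    b = c := by
  by_contra hne
  exact Finset.disjoint_left.mp (hP.2.1 (Finset.mem_coe.mpr hb) (Finset.mem_coe.mpr hc) hne)
    hjb hjc

lemma refines_refl (P : Finset (Finset ℕ)) : Refines P P :=
  fun b hb => ⟨b, hb, subset_rfl⟩

lemma refines_trans {P Q R : Finset (Finset ℕ)} (h1 : Refines P Q) (h2 : Refines Q R) :
    Refines P R := by
  intro b hb
  obtain ⟨c, hc, hbc⟩ := h1 b hb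
  obtain ⟨d, hd, hcd⟩ := h2 c hc
  exact ⟨d, hd, hbc.trans hcd⟩

lemma refines_subset_aux {g : Finset ℕ} {P Q : Finset (Finset ℕ)}
    (hP : IsPartitionOn g P) (hQ : IsPartitionOn g Q)
    (h1 : Refines P Q) (h2 : Refines Q P) : P ⊆ Q := by
  intro b hb
  obtain ⟨c, hc, hbc⟩ := h1 b hb
  obtain ⟨b', hb', hcb'⟩ := h2 c hc
  obtain ⟨j, hj⟩ := hP.1 b hb
  have hbb' : b = b' := blocks_eq hP hb hb' hj (hcb' (hbc hj))
  have hbc' : b = c := subset_antisymm hbc (by rw [hbb']; exact hcb')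
  rwa [hbc']

lemma refines_antisymm {g : Finset ℕ} {P Q : Finset (Finset ℕ)}
    (hP : IsPartitionOn g P) (hQ : IsPartitionOn g Q)
    (h1 : Refines P Q) (h2 : Refines Q P) : P = Q :=
  subset_antisymm (refines_subset_aux hP hQ h1 h2) (refines_subset_aux hQ hP h2 h1)

lemma admissible_subset {P Q : Finset (Finset ℕ)} (h : Admissible s P) (hQP : Q ⊆ P) :
    Admissible s Q :=
  fun b hb b' hb' => h b (hQP hb) b' (hQP hb')

lemma res_mem_APfin {g : Finset ℕ} {u v : Finset (Finset ℕ)}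
    (hu : u ∈ APfin s g) (hv : v ∈ APfin s g) (hvu : Refines v u)
    {b : Finset ℕ} (hb : b ∈ u) :
    v.filter (fun c => c ⊆ b) ∈ APfin s b := by
  classical
  obtain ⟨hup, hua⟩ := mem_APfin_iff.mp hu
  obtain ⟨hvp, hva⟩ := mem_APfin_iff.mp hv
  rw [mem_APfin_iff]
  refine ⟨⟨?_, ?_, ?_⟩, admissible_subset hva (Finset.filter_subset _ _)⟩
  · intro c hc
    exact hvp.1 c (Finset.mem_filter.mp hc).1
  · refine hvp.2.1.subset ?_
    intro c hc
    exact Finset.mem_coe.mpr (Finset.filter_subset _ _ (Finset.mem_coe.mp hc))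
  · apply le_antisymm
    · refine Finset.sup_le ?_
      intro c hc
      exact Finset.le_iff_subset.mpr (Finset.mem_filter.mp hc).2
    · rw [Finset.le_iff_subset]
      intro j hj
      have hjg : j ∈ g := block_subset hup hb hj
      obtain ⟨c, hc, hjc⟩ := exists_block hvp hjg
      obtain ⟨b', hb', hcb'⟩ := hvu c hc
      have hbb' : b = b' := blocks_eq hup hb hb' hj (hcb' hjc)
      refine Finset.mem_sup.mpr ⟨c, Finset.mem_filter.mpr ⟨hc, ?_⟩, hjc⟩
      rw [hbb']
      exact hcb'

lemma res_eq_singleton {g : Finset ℕ} {u : Finset (Finset ℕ)} (hup : IsPartitionOn g u)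
    {b : Finset ℕ} (hb : b ∈ u) : u.filter (fun c => c ⊆ b) = {b} := by
  classical
  ext c
  simp only [Finset.mem_filter, Finset.mem_singleton]
  constructor
  · rintro ⟨hc, hcb⟩
    obtain ⟨j, hj⟩ := hup.1 c hc
    exact blocks_eq hup hc hb hj (hcb hj)
  · rintro rfl
    exact ⟨hb, subset_rfl⟩

lemma singleton_mem_APfin {b : Finset ℕ} (hb : b.Nonempty) : {b} ∈ APfin (s := s) b := by
  rw [mem_APfin_iff]
  refine ⟨⟨?_, ?_, ?_⟩, ?_⟩
  · intro c hc
    rw [Finset.mem_singleton] at hc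
    subst hc
    exact hb
  · simp only [Finset.coe_singleton]
    exact Set.pairwiseDisjoint_singleton _ _
  · simp
  · intro c hc c' hc' hne
    rw [Finset.mem_singleton] at hc hc'
    subst hc
    subst hc'
    exact absurd rfl hne

lemma refines_top {g : Finset ℕ} {P : Finset (Finset ℕ)} (hP : P ∈ APfin s g) :
    Refines P {g} := by
  intro b hb
  exact ⟨g, Finset.mem_singleton_self g, block_subset (mem_APfin_iff.mp hP).1 hb⟩

lemma res_refines {g : Finset ℕ} {u v t : Finset (Finset ℕ)}
    (hu : u ∈ APfin s g) (hv : v ∈ APfin s g) (ht : t ∈ APfin s g)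
    (hvt : Refines v t) (htu : Refines t u) {b : Finset ℕ} (hb : b ∈ u) :
    Refines (v.filter (fun c => c ⊆ b)) (t.filter (fun c => c ⊆ b)) := by
  classical
  intro c hc
  rw [Finset.mem_filter] at hc
  obtain ⟨hcv, hcb⟩ := hc
  obtain ⟨d, hd, hcd⟩ := hvt c hcv
  obtain ⟨e, he, hde⟩ := htu d hd
  obtain ⟨j, hj⟩ := (mem_APfin_iff.mp hv).1.1 c hcv
  have hbe : b = e := blocks_eq (mem_APfin_iff.mp hu).1 hb he (hcb hj) (hde (hcd hj))
  refine ⟨d, Finset.mem_filter.mpr ⟨hd, by rw [hbe]; exact hde⟩, hcd⟩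

lemma eq_of_res_eq {g : Finset ℕ} {u v t : Finset (Finset ℕ)}
    (hu : u ∈ APfin s g) (hv : v ∈ APfin s g) (ht : t ∈ APfin s g)
    (hvu : Refines v u) (htu : Refines t u)
    (h : ∀ b ∈ u, v.filter (fun c => c ⊆ b) = t.filter (fun c => c ⊆ b)) : v = t := by
  classical
  have key : ∀ P Q : Finset (Finset ℕ), Refines P u →
      (∀ b ∈ u, P.filter (fun c => c ⊆ b) = Q.filter (fun c => c ⊆ b)) → P ⊆ Q := by
    intro P Q hPu hPQ c hc
    obtain ⟨b, hb, hcb⟩ := hPu c hc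
    have : c ∈ Q.filter (fun c => c ⊆ b) := by
      rw [← hPQ b hb]
      exact Finset.mem_filter.mpr ⟨hc, hcb⟩
    exact (Finset.mem_filter.mp this).1
  refine subset_antisymm (key v t hvu h) (key t v htu ?_)
  intro b hb
  exact (h b hb).symm

lemma mem_glue {u : Finset (Finset ℕ)} (p : ∀ b ∈ u, Finset (Finset ℕ)) {c : Finset ℕ} :
    c ∈ u.attach.biUnion (fun x => p x.1 x.2) ↔ ∃ b, ∃ hb : b ∈ u, c ∈ p b hb := by
  classical
  simp only [Finset.mem_biUnion, Finset.mem_attach, true_and]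
  constructor
  · rintro ⟨⟨b, hb⟩, h⟩
    exact ⟨b, hb, h⟩
  · rintro ⟨b, hb, h⟩
    exact ⟨⟨b, hb⟩, h⟩

lemma glue_mem_APfin {g : Finset ℕ} {u : Finset (Finset ℕ)} (hu : u ∈ APfin s g)
    (p : ∀ b ∈ u, Finset (Finset ℕ)) (hp : ∀ b (hb : b ∈ u), p b hb ∈ APfin s b) :
    u.attach.biUnion (fun x => p x.1 x.2) ∈ APfin s g := by
  classical
  obtain ⟨hup, hua⟩ := mem_APfin_iff.mp hu
  rw [mem_APfin_iff]
  refine ⟨⟨?_, ?_, ?_⟩, ?_⟩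
  · intro c hc
    obtain ⟨b, hb, hcp⟩ := (mem_glue p).mp hc
    exact (mem_APfin_iff.mp (hp b hb)).1.1 c hcp
  · intro c hc c' hc' hne
    obtain ⟨b, hb, hcp⟩ := (mem_glue p).mp (Finset.mem_coe.mp hc)
    obtain ⟨b', hb', hcp'⟩ := (mem_glue p).mp (Finset.mem_coe.mp hc')
    by_cases hbb' : b = b'
    · subst hbb'
      exact (mem_APfin_iff.mp (hp b hb)).1.2.1 (Finset.mem_coe.mpr hcp)
        (Finset.mem_coe.mpr hcp') hne
    · have hdisj : Disjoint b b' :=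
        hup.2.1 (Finset.mem_coe.mpr hb) (Finset.mem_coe.mpr hb') hbb'
      have h1 : c ⊆ b := block_subset (mem_APfin_iff.mp (hp b hb)).1 hcp
      have h2 : c' ⊆ b' := block_subset (mem_APfin_iff.mp (hp b' hb')).1 hcp'
      exact hdisj.mono (Finset.le_iff_subset.mpr h1) (Finset.le_iff_subset.mpr h2)
  · apply le_antisymm
    · refine Finset.sup_le ?_
      intro c hc
      obtain ⟨b, hb, hcp⟩ := (mem_glue p).mp hc
      have h1 : c ⊆ b := block_subset (mem_APfin_iff.mp (hp b hb)).1 hcp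
      exact Finset.le_iff_subset.mpr (h1.trans (block_subset hup hb))
    · rw [Finset.le_iff_subset]
      intro j hj
      obtain ⟨b, hb, hjb⟩ := exists_block hup hj
      obtain ⟨c, hc, hjc⟩ := exists_block (mem_APfin_iff.mp (hp b hb)).1 hjb
      exact Finset.mem_sup.mpr ⟨c, (mem_glue p).mpr ⟨b, hb, hc⟩, hjc⟩
  · intro c hc c' hc' hne j hjc hw hInner
    obtain ⟨b, hb, hcp⟩ := (mem_glue p).mp hc
    obtain ⟨b', hb', hcp'⟩ := (mem_glue p).mp hc'
    by_cases hbb' : b = b'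
    · subst hbb'
      exact (mem_APfin_iff.mp (hp b hb)).2 c hcp c' hcp' hne j hjc hw hInner
    · have hjb : j ∈ b := block_subset (mem_APfin_iff.mp (hp b hb)).1 hcp hjc
      have hc'b' : c' ⊆ b' := block_subset (mem_APfin_iff.mp (hp b' hb')).1 hcp'
      obtain ⟨hjnc', i, hi, k, hk, hij, hjk⟩ := hInner
      have hjnb' : j ∉ b' := by
        intro hjb'
        exact hbb' (blocks_eq hup hb hb' hjb hjb')
      exact hua b hb b' hb' hbb' j hjb hw ⟨hjnb', i, hc'b' hi, k, hc'b' hk, hij, hjk⟩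

lemma sum_prod_interchange {g : Finset ℕ} {u v t : Finset (Finset ℕ)}
    (hu : u ∈ APfin s g) (hv : v ∈ APfin s g) (ht : t ∈ APfin s g)
    (hvt : Refines v t) (htu : Refines t u)
    (f : Finset ℕ → Finset (Finset ℕ) → ℂ) :
    ∑ t' ∈ (APfin s g).filter (fun t' => Refines v t' ∧ Refines t' t),
        ∏ b ∈ u, f b (t'.filter (fun c => c ⊆ b))
      = ∏ b ∈ u, ∑ w ∈ (APfin s b).filter
          (fun w => Refines (v.filter (fun c => c ⊆ b)) w ∧
            Refines w (t.filter (fun c => c ⊆ b))), f b w := by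
  classical
  rw [Finset.prod_sum]
  refine Finset.sum_bij' (fun t' _ => fun b _ => t'.filter (fun c => c ⊆ b))
    (fun p _ => u.attach.biUnion (fun x => p x.1 x.2)) ?_ ?_ ?_ ?_ ?_
  · intro t' ht'
    obtain ⟨ht'AP, hvt', ht't⟩ := Finset.mem_filter.mp ht'
    have ht'u : Refines t' u := refines_trans ht't htu
    rw [Finset.mem_pi]
    intro b hb
    refine Finset.mem_filter.mpr ⟨res_mem_APfin hu ht'AP ht'u hb, ?_, ?_⟩
    · exact res_refines hu hv ht'AP hvt' ht'u hb
    · exact res_refines hu ht'AP ht ht't htu hb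
  · intro p hp
    rw [Finset.mem_pi] at hp
    have hpAP : ∀ b (hb : b ∈ u), p b hb ∈ APfin s b :=
      fun b hb => (Finset.mem_filter.mp (hp b hb)).1
    refine Finset.mem_filter.mpr ⟨glue_mem_APfin hu p hpAP, ?_, ?_⟩
    · intro c hc
      obtain ⟨b, hb, hcb⟩ := refines_trans hvt htu c hc
      have hres : c ∈ v.filter (fun c => c ⊆ b) := Finset.mem_filter.mpr ⟨hc, hcb⟩
      obtain ⟨d, hd, hcd⟩ := (Finset.mem_filter.mp (hp b hb)).2.1 c hres
      exact ⟨d, (mem_glue p).mpr ⟨b, hb, hd⟩, hcd⟩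
    · intro c hc
      obtain ⟨b, hb, hcp⟩ := (mem_glue p).mp hc
      obtain ⟨d, hd, hcd⟩ := (Finset.mem_filter.mp (hp b hb)).2.2 c hcp
      exact ⟨d, (Finset.mem_filter.mp hd).1, hcd⟩
  · intro t' ht'
    obtain ⟨ht'AP, hvt', ht't⟩ := Finset.mem_filter.mp ht'
    have ht'u : Refines t' u := refines_trans ht't htu
    ext c
    simp only [Finset.mem_biUnion, Finset.mem_attach, true_and, Finset.mem_filter]
    constructor
    · rintro ⟨⟨b, hb⟩, hct', hcb⟩
      exact hct'
    · intro hct'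
      obtain ⟨b, hb, hcb⟩ := ht'u c hct'
      exact ⟨⟨b, hb⟩, hct', hcb⟩
  · intro p hp
    rw [Finset.mem_pi] at hp
    have hpAP : ∀ b (hb : b ∈ u), p b hb ∈ APfin s b :=
      fun b hb => (Finset.mem_filter.mp (hp b hb)).1
    funext b hb
    ext c
    simp only [Finset.mem_filter, Finset.mem_biUnion, Finset.mem_attach, true_and]
    constructor
    · rintro ⟨⟨⟨b', hb'⟩, hcp'⟩, hcb⟩
      have hcb' : c ⊆ b' := block_subset (mem_APfin_iff.mp (hpAP b' hb')).1 hcp'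
      obtain ⟨j, hj⟩ := (mem_APfin_iff.mp (hpAP b' hb')).1.1 c hcp'
      have hbb' : b' = b :=
        blocks_eq (mem_APfin_iff.mp hu).1 hb' hb (hcb' hj) (hcb hj)
      subst hbb'
      exact hcp'
    · intro hcp
      exact ⟨⟨⟨b, hb⟩, hcp⟩, block_subset (mem_APfin_iff.mp (hpAP b hb)).1 hcp⟩
  · intro t' ht'
    exact (Finset.prod_attach u fun b => f b (t'.filter (fun c => c ⊆ b))).symm

lemma mobius_sum_eq (m : Finset ℕ → Finset (Finset ℕ) → Finset (Finset ℕ) → ℂ)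
    (hm : ∀ g : Finset ℕ, IsMobius s g (m g)) {h : Finset ℕ} {x y : Finset (Finset ℕ)}
    (hx : x ∈ APfin s h) (hy : y ∈ APfin s h) (hxy : Refines x y) :
    ∑ w ∈ (APfin s h).filter (fun w => Refines x w ∧ Refines w y), m h x w
      = if x = y then 1 else 0 := by
  classical
  by_cases hne : x = y
  · subst hne
    rw [if_pos rfl]
    have hone : (APfin s h).filter (fun w => Refines x w ∧ Refines w x) = {x} := by
      ext w
      simp only [Finset.mem_filter, Finset.mem_singleton]
      constructor
      · rintro ⟨hw, h1, h2⟩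
        exact refines_antisymm (mem_APfin_iff.mp hw).1 (mem_APfin_iff.mp hx).1 h2 h1
      · rintro rfl
        exact ⟨hx, refines_refl _, refines_refl _⟩
    rw [hone, Finset.sum_singleton]
    exact (hm h).1 x hx
  · rw [if_neg hne]
    have hy_mem : y ∈ (APfin s h).filter (fun w => Refines x w ∧ Refines w y) :=
      Finset.mem_filter.mpr ⟨hy, hxy, refines_refl y⟩
    have herase : ((APfin s h).filter (fun w => Refines x w ∧ Refines w y)).erase y
        = (APfin s h).filter (fun w => Refines x w ∧ Refines w y ∧ w ≠ y) := by
      ext w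
      simp only [Finset.mem_erase, Finset.mem_filter]
      tauto
    rw [← Finset.sum_erase_add _ _ hy_mem, herase, (hm h).2 x hx y hy hxy hne]
    ring

lemma mobius_prod (m : Finset ℕ → Finset (Finset ℕ) → Finset (Finset ℕ) → ℂ)
    (hm : ∀ g : Finset ℕ, IsMobius s g (m g)) :
    ∀ n : ℕ, ∀ g : Finset ℕ, ∀ u v t : Finset (Finset ℕ),
      u ∈ APfin s g → v ∈ APfin s g → t ∈ APfin s g →
      Refines v t → Refines t u →
      ((APfin s g).filter (fun t' => Refines v t' ∧ Refines t' t)).card ≤ n →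
      m g v t = ∏ b ∈ u, m b (v.filter (fun c => c ⊆ b)) (t.filter (fun c => c ⊆ b)) := by
  classical
  intro n
  induction n with
  | zero =>
    intro g u v t hu hv ht hvt htu hcard
    exfalso
    have htI : t ∈ (APfin s g).filter (fun t' => Refines v t' ∧ Refines t' t) :=
      Finset.mem_filter.mpr ⟨ht, hvt, refines_refl t⟩
    have := Finset.card_pos.mpr ⟨t, htI⟩
    omega
  | succ n ih =>
    intro g u v t hu hv ht hvt htu hcard
    by_cases hne : v = t
    · subst hne
      rw [(hm g).1 v hv]
      symm
      apply Finset.prod_eq_one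
      intro b hb
      exact (hm b).1 _ (res_mem_APfin hu hv (refines_trans hvt htu) hb)
    · have hvu : Refines v u := refines_trans hvt htu
      set I := (APfin s g).filter (fun t' => Refines v t' ∧ Refines t' t) with hI
      have htI : t ∈ I := Finset.mem_filter.mpr ⟨ht, hvt, refines_refl t⟩
      have hsum0 : ∑ t' ∈ I, ∏ b ∈ u,
          m b (v.filter (fun c => c ⊆ b)) (t'.filter (fun c => c ⊆ b)) = 0 := by
        rw [hI, sum_prod_interchange hu hv ht hvt htu
          (fun b w => m b (v.filter (fun c => c ⊆ b)) w)]
        obtain ⟨b0, hb0, hne0⟩ :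
            ∃ b ∈ u, v.filter (fun c => c ⊆ b) ≠ t.filter (fun c => c ⊆ b) := by
          by_contra hcon
          push_neg at hcon
          exact hne (eq_of_res_eq hu hv ht hvu htu hcon)
        apply Finset.prod_eq_zero hb0
        rw [mobius_sum_eq m hm (res_mem_APfin hu hv hvu hb0)
          (res_mem_APfin hu ht htu hb0) (res_refines hu hv ht hvt htu hb0)]
        exact if_neg hne0
      have hIH : ∀ t' ∈ I.erase t, m g v t' = ∏ b ∈ u,
          m b (v.filter (fun c => c ⊆ b)) (t'.filter (fun c => c ⊆ b)) := by
        intro t' ht'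
        obtain ⟨hne', ht'I⟩ := Finset.mem_erase.mp ht'
        obtain ⟨ht'AP, hvt', ht't⟩ := Finset.mem_filter.mp ht'I
        refine ih g u v t' hu hv ht'AP hvt' (refines_trans ht't htu) ?_
        have hsub : (APfin s g).filter (fun w => Refines v w ∧ Refines w t')
            ⊆ I.erase t := by
          intro w hw
          obtain ⟨hwAP, hvw, hwt'⟩ := Finset.mem_filter.mp hw
          refine Finset.mem_erase.mpr ⟨?_,
            Finset.mem_filter.mpr ⟨hwAP, hvw, refines_trans hwt' ht't⟩⟩
          rintro rfl
          exact hne' (refines_antisymm (mem_APfin_iff.mp ht'AP).1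
            (mem_APfin_iff.mp hwAP).1 ht't hwt')
        have h1 := Finset.card_le_card hsub
        have h2 := Finset.card_erase_of_mem htI
        omega
      rw [(hm g).2 v hv t ht hvt hne]
      have hset : (APfin s g).filter (fun t' => Refines v t' ∧ Refines t' t ∧ t' ≠ t)
          = I.erase t := by
        ext w
        simp only [hI, Finset.mem_filter, Finset.mem_erase]
        tauto
      rw [hset, Finset.sum_congr rfl hIH]
      have hkey := Finset.sum_erase_add I
        (fun t' => ∏ b ∈ u, m b (v.filter (fun c => c ⊆ b)) (t'.filter (fun c => c ⊆ b)))
        htI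
      rw [hsum0] at hkey
      linear_combination -hkey

end AuxLemmas

open scoped Classical in
/-- Multiplicativity of the Möbius function: for `v ≤ u` in `AP(s)`,
each induced partition `v^k` of a block `u_k` is admissible and
`m(v|u) = m(v¹|u₁)⋯m(v^p|u_p)`; consequently for `v < 1_s`,
`m(v|1_s) = −Σ_{v ≤ u < 1_s} m(v¹|u₁)⋯m(v^p|u_p)`. -/
theorem mobius_multiplicative (s : Word) (hs : s ≠ [])
    (m : Finset ℕ → Finset (Finset ℕ) → Finset (Finset ℕ) → ℂ)
    (hm : ∀ g : Finset ℕ, IsMobius s g (m g))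
    (u v : Finset (Finset ℕ))
    (hu : u ∈ APfin s (Finset.range s.length))
    (hv : v ∈ APfin s (Finset.range s.length))
    (hvu : Refines v u) :
    (∀ b ∈ u, v.filter (fun c => c ⊆ b) ∈ APfin s b) ∧
      m (Finset.range s.length) v u =
        ∏ b ∈ u, m b (v.filter fun c => c ⊆ b) {b} ∧
      (v ≠ {Finset.range s.length} →
        m (Finset.range s.length) v {Finset.range s.length} =
          -∑ t ∈ (APfin s (Finset.range s.length)).filter
              (fun t => Refines v t ∧ t ≠ {Finset.range s.length}),
            ∏ b ∈ t, m b (v.filter fun c => c ⊆ b) {b}) := by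
  classical
  have hgne : (Finset.range s.length).Nonempty :=
    Finset.nonempty_range_iff.mpr (fun h => hs (List.length_eq_zero_iff.mp h))
  refine ⟨fun b hb => res_mem_APfin hu hv hvu hb, ?_, ?_⟩
  · rw [mobius_prod m hm
      (((APfin s (Finset.range s.length)).filter
        (fun t' => Refines v t' ∧ Refines t' u)).card)
      (Finset.range s.length) u v u hu hv hu hvu (refines_refl u) le_rfl]
    apply Finset.prod_congr rfl
    intro b hb
    rw [res_eq_singleton (mem_APfin_iff.mp hu).1 hb]
  · intro hvne
    have htop : {Finset.range s.length} ∈ APfin s (Finset.range s.length) :=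
      singleton_mem_APfin hgne
    have hvtop : Refines v {Finset.range s.length} := refines_top hv
    rw [(hm (Finset.range s.length)).2 v hv {Finset.range s.length} htop hvtop hvne]
    congr 1
    have hset : (APfin s (Finset.range s.length)).filter
        (fun t => Refines v t ∧ Refines t {Finset.range s.length}
          ∧ t ≠ {Finset.range s.length})
        = (APfin s (Finset.range s.length)).filter
          (fun t => Refines v t ∧ t ≠ {Finset.range s.length}) := by
      ext w
      simp only [Finset.mem_filter]
      constructor
      · tauto
      · rintro ⟨hw, h1, h2⟩
        exact ⟨hw, h1, refines_top hw, h2⟩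
    rw [hset]
    apply Finset.sum_congr rfl
    intro t htmem
    obtain ⟨htAP, hvt, -⟩ := Finset.mem_filter.mp htmem
    rw [mobius_prod m hm
      (((APfin s (Finset.range s.length)).filter
        (fun t' => Refines v t' ∧ Refines t' t)).card)
      (Finset.range s.length) t v t htAP hv htAP hvt (refines_refl t) le_rfl]
    apply Finset.prod_congr rfl
    intro b hb
    rw [res_eq_singleton (mem_APfin_iff.mp htAP).1 hb]
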